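/- arXiv:0912.4064 — 6 statements merged into one kernel-verified Lean document; each statement's English description precedes it below -/
import Mathlib

section
/- Let n ≥ 2, let U ⊆ ℝⁿ be open, and let Ψ : U → ℝⁿ be a smooth map which is a diffeomorphism onto its image. Suppose that for every p ∈ U and every r > 0 such that the closed ball of centre p and radius r is contained in U, the image Ψ({ x : ‖x − p‖ = r }) is a Euclidean sphere, i.e. equals { y ∈ ℝⁿ : ‖y − c‖ = ρ } for some c ∈ ℝⁿ and ρ > 0. Then Ψ is conformal at every point of U, i.e. at each p ∈ U the differential DΨ_p is a nonzero scalar multiple of a linear isometry of ℝⁿ. -/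
/-!
Let `A` be the derivative of `Ψ` at `p` and suppose `Ψ` maps the sphere `S(p, r)` onto `S(c, ρ)`.
For a unit vector `w`, the images of `p ± r w` are, up to `o(r)`, the points `Ψ p ± r A w`; both
lie on `S(c, ρ)`, so the parallelogram law gives `ρ² = r² ‖A w‖² + ‖Ψ p - c‖² + o(r²)`. The
image sphere lies in a ball of radius `O(r)` about `Ψ p`, hence so does its centre `c`, which makes
the error terms uniform. Thus `‖A w‖` does not depend on the unit vector `w`, and an injective
linear map that scales all norms by the same factor is a nonzero multiple of an isometry.
-/

noncomputable section

open Metric Filter Topology Set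

lemma abs_norm_add_sq_sub_norm_sq_le {E : Type*} [SeminormedAddCommGroup E] {a e : E} {η K : ℝ}
    (he : ‖e‖ ≤ η) (ha : ‖a‖ ≤ K) : |‖a + e‖ ^ 2 - ‖a‖ ^ 2| ≤ η * (2 * K + η) := by
  have hdiff : |‖a + e‖ - ‖a‖| ≤ ‖e‖ := by simpa using abs_norm_sub_norm_le (a + e) a
  have hsum : ‖a + e‖ + ‖a‖ ≤ 2 * ‖a‖ + ‖e‖ := by linarith [norm_add_le a e]
  calc |‖a + e‖ ^ 2 - ‖a‖ ^ 2| = |‖a + e‖ - ‖a‖| * (‖a + e‖ + ‖a‖) := by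
        rw [sq_sub_sq, abs_mul, abs_of_nonneg (by positivity : 0 ≤ ‖a + e‖ + ‖a‖), mul_comm]
    _ ≤ ‖e‖ * (2 * ‖a‖ + ‖e‖) := by gcongr
    _ ≤ η * (2 * K + η) := by gcongr; exact (norm_nonneg e).trans he

lemma dist_le_of_sphere_subset_closedBall {E : Type*} [SeminormedAddCommGroup E]
    [NormedSpace ℝ E] {c x y : E} {ρ R : ℝ} (hy : y ∈ sphere c ρ)
    (h : sphere c ρ ⊆ closedBall x R) : dist c x ≤ R := by
  have hy' : Equiv.pointReflection c y ∈ sphere c ρ := by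
    simpa [mem_sphere, Equiv.pointReflection_apply, dist_eq_norm, ← sub_sub, norm_sub_rev] using hy
  simpa using (convex_closedBall x R).midpoint_mem (h hy) (h hy')

lemma abs_sq_sub_norm_sq_sub_dist_sq_le {F : Type*} [NormedAddCommGroup F]
    [InnerProductSpace ℝ F] {x c s e₁ e₂ : F} {ρ η K : ℝ} (h₁ : x + s + e₁ ∈ sphere c ρ)
    (h₂ : x - s + e₂ ∈ sphere c ρ) (he₁ : ‖e₁‖ ≤ η) (he₂ : ‖e₂‖ ≤ η) (hK : ‖s‖ + dist x c ≤ K) :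
    |ρ ^ 2 - ‖s‖ ^ 2 - dist x c ^ 2| ≤ η * (2 * K + η) := by
  rw [dist_eq_norm] at hK ⊢
  have hplus : |ρ ^ 2 - ‖s + (x - c)‖ ^ 2| ≤ η * (2 * K + η) := by
    rw [← mem_sphere_iff_norm.mp h₁, show x + s + e₁ - c = s + (x - c) + e₁ by abel]
    exact abs_norm_add_sq_sub_norm_sq_le he₁ ((norm_add_le _ _).trans hK)
  have hminus : |ρ ^ 2 - ‖(x - c) - s‖ ^ 2| ≤ η * (2 * K + η) := by
    rw [← mem_sphere_iff_norm.mp h₂, show x - s + e₂ - c = (x - c) - s + e₂ by abel]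
    exact abs_norm_add_sq_sub_norm_sq_le he₂ ((norm_sub_le _ _).trans (by linarith))
  have hpar := parallelogram_law_with_norm ℝ s (x - c)
  rw [← norm_neg (s - (x - c)), neg_sub] at hpar
  rw [abs_le] at hplus hminus ⊢
  constructor <;> linarith

section Cospherical

variable {E F : Type*} [NormedAddCommGroup E] [NormedSpace ℝ E]

lemma HasFDerivAt.eventually_forall_norm_sub_le_of_norm_eq [NormedAddCommGroup F]
    [NormedSpace ℝ F] {Ψ : E → F} {A : E →L[ℝ] F} {p : E} (hΨ : HasFDerivAt Ψ A p) {ε : ℝ}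
    (hε : 0 < ε) :
    ∀ᶠ r in 𝓝[>] (0 : ℝ), ∀ h : E, ‖h‖ = r → ‖Ψ (p + h) - Ψ p - A h‖ ≤ ε * r := by
  obtain ⟨δ, hδ, hball⟩ :=
    Metric.eventually_nhds_iff.mp ((hasFDerivAt_iff_isLittleO_nhds_zero.mp hΨ).def hε)
  filter_upwards [Ioo_mem_nhdsGT hδ] with r hr h hh
  simpa [hh] using hball (show dist h 0 < δ by simpa [hh] using hr.2)

variable [NormedAddCommGroup F] [InnerProductSpace ℝ F]

lemma abs_sq_radius_sub_le_of_image_sphere_eq {Ψ : E → F} {A : E →L[ℝ] F} {p : E} {c : F}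
    {r ε ρ : ℝ} (hr : 0 < r) (happrox : ∀ h : E, ‖h‖ = r → ‖Ψ (p + h) - Ψ p - A h‖ ≤ ε * r)
    (hsph : Ψ '' sphere p r = sphere c ρ) {w : E} (hw : ‖w‖ = 1) :
    |ρ ^ 2 - r ^ 2 * ‖A w‖ ^ 2 - dist (Ψ p) c ^ 2| ≤ ε * (4 * ‖A‖ + 3 * ε) * r ^ 2 := by
  have hmem : ∀ h : E, ‖h‖ = r → Ψ (p + h) ∈ sphere c ρ := fun h hh =>
    hsph ▸ mem_image_of_mem Ψ (by simpa [mem_sphere_iff_norm] using hh)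
  have hnear : ∀ h : E, ‖h‖ = r → dist (Ψ (p + h)) (Ψ p) ≤ (‖A‖ + ε) * r := fun h hh =>
    calc dist (Ψ (p + h)) (Ψ p) = ‖A h + (Ψ (p + h) - Ψ p - A h)‖ := by
          rw [dist_eq_norm, add_sub_cancel]
      _ ≤ ‖A‖ * ‖h‖ + ε * r :=
          (norm_add_le _ _).trans (add_le_add (A.le_opNorm h) (happrox h hh))
      _ = (‖A‖ + ε) * r := by rw [hh]; ring
  have hrw : ‖r • w‖ = r := by rw [norm_smul, hw, Real.norm_of_nonneg hr.le, mul_one]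
  have hcenter : dist (Ψ p) c ≤ (‖A‖ + ε) * r := by
    refine dist_comm c (Ψ p) ▸ dist_le_of_sphere_subset_closedBall (hmem _ hrw) ?_
    rw [← hsph]
    rintro _ ⟨x, hx, rfl⟩
    simpa using hnear (x - p) (by simpa [mem_sphere_iff_norm] using hx)
  have hAw : ‖r • A w‖ = r * ‖A w‖ := by rw [norm_smul, Real.norm_of_nonneg hr.le]
  have hAw_le : ‖A w‖ ≤ ‖A‖ := by simpa [hw] using A.le_opNorm w
  have hplus : Ψ p + r • A w + (Ψ (p + r • w) - Ψ p - A (r • w)) = Ψ (p + r • w) := by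
    rw [map_smul]; abel
  have hminus : Ψ p - r • A w + (Ψ (p + -(r • w)) - Ψ p - A (-(r • w))) = Ψ (p + -(r • w)) := by
    rw [map_neg, map_smul]; abel
  have key := abs_sq_sub_norm_sq_sub_dist_sq_le (K := (2 * ‖A‖ + ε) * r)
    (by rw [hplus]; exact hmem _ hrw) (by rw [hminus]; exact hmem _ ((norm_neg _).trans hrw))
    (happrox _ hrw) (happrox _ ((norm_neg _).trans hrw))
    (by rw [hAw]; nlinarith [mul_le_mul_of_nonneg_left hAw_le hr.le])
  rw [hAw, mul_pow] at key
  exact key.trans_eq (by ring)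

def IsCosphericalAt (Ψ : E → F) (p : E) : Prop :=
  ∀ᶠ r in 𝓝[>] (0 : ℝ), ∃ (c : F) (ρ : ℝ), Ψ '' sphere p r = sphere c ρ

theorem IsCosphericalAt.norm_map_eq {Ψ : E → F} {A : E →L[ℝ] F} {p : E}
    (hcosph : IsCosphericalAt Ψ p) (hΨ : HasFDerivAt Ψ A p) {u v : E} (hu : ‖u‖ = 1)
    (hv : ‖v‖ = 1) : ‖A u‖ = ‖A v‖ := by
  have hbound : ∀ ε > 0, |‖A u‖ ^ 2 - ‖A v‖ ^ 2| ≤ 2 * (ε * (4 * ‖A‖ + 3 * ε)) := by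
    intro ε hε
    obtain ⟨r, hr : 0 < r, happrox, c, ρ, hsph⟩ := (eventually_mem_nhdsWithin.and
      ((hΨ.eventually_forall_norm_sub_le_of_norm_eq hε).and hcosph)).exists
    have hu' := abs_sq_radius_sub_le_of_image_sphere_eq hr happrox hsph hu
    have hv' := abs_sq_radius_sub_le_of_image_sphere_eq hr happrox hsph hv
    refine le_of_mul_le_mul_left ?_ (pow_pos hr 2)
    calc r ^ 2 * |‖A u‖ ^ 2 - ‖A v‖ ^ 2| = |r ^ 2 * (‖A u‖ ^ 2 - ‖A v‖ ^ 2)| := by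
          rw [abs_mul, abs_of_pos (pow_pos hr 2)]
      _ = |(ρ ^ 2 - r ^ 2 * ‖A v‖ ^ 2 - dist (Ψ p) c ^ 2)
            - (ρ ^ 2 - r ^ 2 * ‖A u‖ ^ 2 - dist (Ψ p) c ^ 2)| := by
          congr 1; ring
      _ ≤ ε * (4 * ‖A‖ + 3 * ε) * r ^ 2 + ε * (4 * ‖A‖ + 3 * ε) * r ^ 2 :=
          (abs_sub _ _).trans (add_le_add hv' hu')
      _ = r ^ 2 * (2 * (ε * (4 * ‖A‖ + 3 * ε))) := by ring
  have hlim : Tendsto (fun ε : ℝ => 2 * (ε * (4 * ‖A‖ + 3 * ε))) (𝓝[>] 0) (𝓝 0) :=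
    ((by fun_prop : Continuous fun ε : ℝ => 2 * (ε * (4 * ‖A‖ + 3 * ε))).tendsto' 0 0
      (by ring)).mono_left nhdsWithin_le_nhds
  have hsq : |‖A u‖ ^ 2 - ‖A v‖ ^ 2| ≤ 0 :=
    ge_of_tendsto hlim (eventually_mem_nhdsWithin.mono hbound)
  exact (pow_left_inj₀ (norm_nonneg _) (norm_nonneg _) two_ne_zero).mp
    (sub_eq_zero.mp (abs_nonpos_iff.mp hsq))

end Cospherical

theorem isConformalMap_of_injective_of_norm_eq {E F : Type*} [NormedAddCommGroup E]
    [NormedSpace ℝ E] [NormedAddCommGroup F] [NormedSpace ℝ F] {A : E →L[ℝ] F}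
    (hA : Function.Injective A) (h : ∀ u v : E, ‖u‖ = 1 → ‖v‖ = 1 → ‖A u‖ = ‖A v‖) :
    IsConformalMap A := by
  nontriviality E
  obtain ⟨w, hw⟩ := exists_norm_eq E zero_le_one
  have hk : 0 < ‖A w‖ := norm_pos_iff.mpr fun h0 => by
    simp [hA (h0.trans (map_zero A).symm)] at hw
  have hnorm : ∀ x, ‖A x‖ = ‖A w‖ * ‖x‖ := by
    intro x
    rcases eq_or_ne x 0 with rfl | hx
    · simp
    have hx' : ‖x‖ ≠ 0 := norm_ne_zero_iff.mpr hx
    have hunit : ‖‖x‖⁻¹ • x‖ = 1 := by rw [norm_smul, norm_inv, norm_norm, inv_mul_cancel₀ hx']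
    calc ‖A x‖ = ‖A (‖x‖⁻¹ • x)‖ * ‖x‖ := by
          rw [map_smul, norm_smul, norm_inv, norm_norm]; field_simp
      _ = ‖A w‖ * ‖x‖ := by rw [h _ w hunit hw]
  refine ⟨‖A w‖, hk.ne', ⟨(‖A w‖⁻¹ • A : E →L[ℝ] F), fun x => ?_⟩, ?_⟩
  · change ‖‖A w‖⁻¹ • A x‖ = ‖x‖
    rw [norm_smul, norm_inv, norm_norm, hnorm x, inv_mul_cancel_left₀ hk.ne']
  · ext x
    exact (smul_inv_smul₀ hk.ne' (A x)).symm

theorem cospherical_implies_conformal_general {n : ℕ}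
    (U : Set (EuclideanSpace ℝ (Fin n))) (hU : IsOpen U)
    (Ψ : EuclideanSpace ℝ (Fin n) → EuclideanSpace ℝ (Fin n))
    (hΨ : ContDiffOn ℝ (⊤ : ℕ∞) Ψ U)
    (hdiffeo : ∀ p ∈ U, Function.Bijective (fderiv ℝ Ψ p))
    (hsph : ∀ p ∈ U, ∀ r : ℝ, 0 < r → Metric.closedBall p r ⊆ U →
      ∃ (c : EuclideanSpace ℝ (Fin n)) (ρ : ℝ), 0 < ρ ∧
        Ψ '' {x | ‖x - p‖ = r} = {y | ‖y - c‖ = ρ}) :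
    ∀ p ∈ U, ∃ (k : ℝ) (L : EuclideanSpace ℝ (Fin n) →ₗᵢ[ℝ] EuclideanSpace ℝ (Fin n)),
      k ≠ 0 ∧ ∀ v, fderiv ℝ Ψ p v = k • L v := by
  intro p hp
  have hderiv : HasFDerivAt Ψ (fderiv ℝ Ψ p) p :=
    ((hΨ.differentiableOn (by simp)).differentiableAt (hU.mem_nhds hp)).hasFDerivAt
  have hcosph : IsCosphericalAt Ψ p := by
    filter_upwards [eventually_mem_nhdsWithin,
      nhdsWithin_le_nhds (eventually_closedBall_subset (hU.mem_nhds hp))] with r hr hball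
    obtain ⟨c, ρ, -, himage⟩ := hsph p hp r hr hball
    exact ⟨c, ρ, by simpa only [sphere, dist_eq_norm] using himage⟩
  obtain ⟨k, hk, L, hL⟩ := isConformalMap_of_injective_of_norm_eq (hdiffeo p hp).injective
    fun u v hu hv => hcosph.norm_map_eq hderiv hu hv
  exact ⟨k, L, hk, fun v => by rw [hL]; rfl⟩

/-- A cospherical diffeomorphism of a Euclidean open set (one mapping every Euclidean
sphere contained in `U` to a Euclidean sphere) is conformal at every point. -/
theorem cospherical_implies_conformal {n : ℕ} (hn : 2 ≤ n)
    (U : Set (EuclideanSpace ℝ (Fin n))) (hU : IsOpen U)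
    (Ψ : EuclideanSpace ℝ (Fin n) → EuclideanSpace ℝ (Fin n))
    (hΨ : ContDiffOn ℝ (⊤ : ℕ∞) Ψ U)
    (hinj : Set.InjOn Ψ U)
    (hdiffeo : ∀ p ∈ U, Function.Bijective (fderiv ℝ Ψ p))
    (hsph : ∀ p ∈ U, ∀ r : ℝ, 0 < r → Metric.closedBall p r ⊆ U →
      ∃ (c : EuclideanSpace ℝ (Fin n)) (ρ : ℝ), 0 < ρ ∧
        Ψ '' {x | ‖x - p‖ = r} = {y | ‖y - c‖ = ρ}) :
    ∀ p ∈ U, ∃ (k : ℝ) (L : EuclideanSpace ℝ (Fin n) →ₗᵢ[ℝ] EuclideanSpace ℝ (Fin n)),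
      k ≠ 0 ∧ ∀ v, fderiv ℝ Ψ p v = k • L v :=
  cospherical_implies_conformal_general U hU Ψ hΨ hdiffeo hsph
end
end

section
/- Let U ⊆ ℝ² be open and connected, and let a, b, k : U → ℝ be smooth functions satisfying on all of U the four equations k = −∂₁b, ∂₂b = 2·∂₁a, ∂₁a = 2·∂₂b, and k = −∂₂a, where ∂₁ and ∂₂ denote the partial derivatives with respect to the first and second coordinate. Then k is constant on U. -/
noncomputable section

/-- Partial derivative with respect to the first coordinate of a function on `ℝ²`. -/
def pd1 (f : ℝ × ℝ → ℝ) (x : ℝ × ℝ) : ℝ := fderiv ℝ f x (1, 0)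

/-- Partial derivative with respect to the second coordinate of a function on `ℝ²`. -/
def pd2 (f : ℝ × ℝ → ℝ) (x : ℝ × ℝ) : ℝ := fderiv ℝ f x (0, 1)

/-!
The two middle equations say `∂₂b = 2∂₁a` and `∂₁a = 2∂₂b`, which force `∂₁a = ∂₂b = 0` on `U`.
Since mixed partial derivatives of a `C²` function commute,
`∂₁k = -∂₁∂₂a = -∂₂∂₁a = 0` and `∂₂k = -∂₂∂₁b = -∂₁∂₂b = 0`,
so `k` has vanishing derivative on the connected open set `U` and is therefore constant.
-/

open Filter Topology

section MixedPartials

variable {E F : Type*} [NormedAddCommGroup E] [NormedSpace ℝ E] [NormedAddCommGroup F]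
  [NormedSpace ℝ F] {f : E → F} {x : E}

theorem ContDiffAt.differentiableAt_fderiv_apply (hf : ContDiffAt ℝ 2 f x) (v : E) :
    DifferentiableAt ℝ (fun y => fderiv ℝ f y v) x :=
  ((hf.fderiv_right le_rfl).differentiableAt one_ne_zero).clm_apply (differentiableAt_const v)

theorem ContDiffAt.fderiv_fderiv_apply (hf : ContDiffAt ℝ 2 f x) (v w : E) :
    fderiv ℝ (fun y => fderiv ℝ f y v) x w = fderiv ℝ (fderiv ℝ f) x w v := by
  simp [fderiv_clm_apply ((hf.fderiv_right le_rfl).differentiableAt one_ne_zero)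
    (differentiableAt_const v)]

theorem ContDiffAt.fderiv_fderiv_apply_comm (hf : ContDiffAt ℝ 2 f x) (v w : E) :
    fderiv ℝ (fun y => fderiv ℝ f y v) x w = fderiv ℝ (fun y => fderiv ℝ f y w) x v := by
  rw [hf.fderiv_fderiv_apply, hf.fderiv_fderiv_apply,
    (hf.isSymmSndFDerivAt (by simp [minSmoothness_of_isRCLikeNormedField])).eq]

theorem ContDiffAt.fderiv_fderiv_apply_eq_zero (hf : ContDiffAt ℝ 2 f x) (v : E) {w : E}
    (hw : ∀ᶠ y in 𝓝 x, fderiv ℝ f y w = 0) :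
    fderiv ℝ (fun y => fderiv ℝ f y v) x w = 0 := by
  rw [hf.fderiv_fderiv_apply_comm, EventuallyEq.fderiv_eq (f := fun _ => (0 : F)) hw]
  simp

theorem ContinuousLinearMap.eq_zero_of_apply_basis {L : ℝ × ℝ →L[ℝ] F}
    (h₁ : L (1, 0) = 0) (h₂ : L (0, 1) = 0) : L = 0 := by
  ext <;> simpa

end MixedPartials

theorem infinitesimal_beltrami_flat_general
    (U : Set (ℝ × ℝ)) (hU : IsOpen U) (hconn : IsConnected U)
    (a b k : ℝ × ℝ → ℝ)
    (ha : ContDiffOn ℝ (⊤ : ℕ∞) a U) (hb : ContDiffOn ℝ (⊤ : ℕ∞) b U)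
    (h1 : ∀ x ∈ U, k x = -pd1 b x)
    (h2 : ∀ x ∈ U, pd2 b x = 2 * pd1 a x)
    (h3 : ∀ x ∈ U, pd1 a x = 2 * pd2 b x)
    (h4 : ∀ x ∈ U, k x = -pd2 a x) :
    ∀ x ∈ U, ∀ y ∈ U, k x = k y := by
  simp only [pd1, pd2] at h1 h2 h3 h4
  have smooth {f : ℝ × ℝ → ℝ} (hf : ContDiffOn ℝ (⊤ : ℕ∞) f U) {x} (hx : x ∈ U) :
      ContDiffAt ℝ 2 f x :=
    (hf.contDiffAt (hU.mem_nhds hx)).of_le (WithTop.coe_le_coe.mpr le_top)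
  have near {p : ℝ × ℝ → Prop} (hp : ∀ y ∈ U, p y) {x} (hx : x ∈ U) : ∀ᶠ y in 𝓝 x, p y :=
    eventually_of_mem (hU.mem_nhds hx) hp
  have hb₂ : ∀ x ∈ U, fderiv ℝ b x (0, 1) = 0 := fun x hx => by linarith [h2 x hx, h3 x hx]
  have ha₁ : ∀ x ∈ U, fderiv ℝ a x (1, 0) = 0 := fun x hx => by linarith [h2 x hx, h3 x hx]
  have hdk : U.EqOn (fderiv ℝ k) 0 := by
    intro x hx
    refine ContinuousLinearMap.eq_zero_of_apply_basis ?_ ?_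
    · rw [EventuallyEq.fderiv_eq (near h4 hx), fderiv_fun_neg, neg_apply,
        (smooth ha hx).fderiv_fderiv_apply_eq_zero _ (near ha₁ hx), neg_zero]
    · rw [EventuallyEq.fderiv_eq (near h1 hx), fderiv_fun_neg, neg_apply,
        (smooth hb hx).fderiv_fderiv_apply_eq_zero _ (near hb₂ hx), neg_zero]
  have hk : DifferentiableOn ℝ k U := fun x hx =>
    ((smooth hb hx).differentiableAt_fderiv_apply _).neg.congr_of_eventuallyEq
      (near h1 hx) |>.differentiableWithinAt
  exact fun x hx y hy => hU.is_const_of_fderiv_eq_zero hconn.isPreconnected hk hdk hx hy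

/-- Flat case of the two-dimensional infinitesimal Beltrami theorem, in coordinates:
if `k = −∂₁b`, `∂₂b = 2∂₁a`, `∂₁a = 2∂₂b` and `k = −∂₂a` on an open connected set,
then `k` is constant. -/
theorem infinitesimal_beltrami_flat
    (U : Set (ℝ × ℝ)) (hU : IsOpen U) (hconn : IsConnected U)
    (a b k : ℝ × ℝ → ℝ)
    (ha : ContDiffOn ℝ (⊤ : ℕ∞) a U) (hb : ContDiffOn ℝ (⊤ : ℕ∞) b U)
    (hk : ContDiffOn ℝ (⊤ : ℕ∞) k U)
    (h1 : ∀ x ∈ U, k x = -pd1 b x)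
    (h2 : ∀ x ∈ U, pd2 b x = 2 * pd1 a x)
    (h3 : ∀ x ∈ U, pd1 a x = 2 * pd2 b x)
    (h4 : ∀ x ∈ U, k x = -pd2 a x) :
    ∀ x ∈ U, ∀ y ∈ U, k x = k y :=
  infinitesimal_beltrami_flat_general U hU hconn a b k ha hb h1 h2 h3 h4
end
end

section
/- Let S = { (u, v) ∈ ℝ² : |u| < π/2 } and let δE, δF, δG : S → ℝ be smooth functions satisfying on all of S the four equations: (i) (1/2)·∂_u δE = 2·(sin u / cos³u)·δG + (1/cos²u)·∂_u δG; (ii) 2·∂_u δF = ∂_v δE; (iii) ∂_v δF − sin u · cos u · δE − (1/2)·∂_u δG = 0; (iv) (1/(2·cos²u))·∂_v δG = ∂_v δE + 3·tan u · δF. Define δK : S → ℝ by δK = −δE − (1/4)·∂_u∂_u δE. Then ∂_v δK = 0 at every point of S. -/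
/-!
Clearing denominators, differentiating (i) in `v` and (iv) in `u`, and eliminating the mixed
derivative of `δG` with the help of (ii) gives the first-order relation
`cos² u · ∂ᵤ∂ᵥδE + 2 sin u cos u · ∂ᵥδE = −4 δF`.
Differentiating this relation once more in `u` and using (ii) again yields
`∂ᵥ∂ᵤ∂ᵤδE = −4 ∂ᵥδE`, which is exactly `∂ᵥδK = 0`.
-/

open Real

noncomputable section

/-- Partial derivative in the `u` (first) coordinate. -/
def pdu (f : ℝ × ℝ → ℝ) (x : ℝ × ℝ) : ℝ := fderiv ℝ f x (1, 0)

/-- Partial derivative in the `v` (second) coordinate. -/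
def pdv (f : ℝ × ℝ → ℝ) (x : ℝ × ℝ) : ℝ := fderiv ℝ f x (0, 1)

open Filter Set
open scoped ContDiff

section PartialDerivatives

variable {f g : ℝ × ℝ → ℝ} {p : ℝ × ℝ} {S : Set (ℝ × ℝ)}

theorem pdu_congr_of_eqOn (hS : IsOpen S) (hp : p ∈ S) (h : EqOn f g S) :
    pdu f p = pdu g p := by
  rw [pdu, (eventuallyEq_of_mem (hS.mem_nhds hp) h).fderiv_eq, pdu]

theorem pdv_congr_of_eqOn (hS : IsOpen S) (hp : p ∈ S) (h : EqOn f g S) :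
    pdv f p = pdv g p := by
  rw [pdv, (eventuallyEq_of_mem (hS.mem_nhds hp) h).fderiv_eq, pdv]

theorem pdu_add (hf : DifferentiableAt ℝ f p) (hg : DifferentiableAt ℝ g p) :
    pdu (fun x => f x + g x) p = pdu f p + pdu g p := by
  simp [pdu, fderiv_fun_add hf hg]

theorem pdv_add (hf : DifferentiableAt ℝ f p) (hg : DifferentiableAt ℝ g p) :
    pdv (fun x => f x + g x) p = pdv f p + pdv g p := by
  simp [pdv, fderiv_fun_add hf hg]

theorem pdv_sub (hf : DifferentiableAt ℝ f p) (hg : DifferentiableAt ℝ g p) :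
    pdv (fun x => f x - g x) p = pdv f p - pdv g p := by
  simp [pdv, fderiv_fun_sub hf hg]

theorem pdv_neg : pdv (fun x => -f x) p = -pdv f p := by
  simp [pdv]

theorem pdu_const_mul (hf : DifferentiableAt ℝ f p) (c : ℝ) :
    pdu (fun x => c * f x) p = c * pdu f p := by
  simp [pdu, fderiv_const_mul hf c]

theorem pdv_const_mul (hf : DifferentiableAt ℝ f p) (c : ℝ) :
    pdv (fun x => c * f x) p = c * pdv f p := by
  simp [pdv, fderiv_const_mul hf c]

section FirstCoordinateFactor

variable {φ : ℝ → ℝ} {d : ℝ}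

theorem HasDerivAt.hasFDerivAt_comp_fst (hφ : HasDerivAt φ d p.1) :
    HasFDerivAt (fun x : ℝ × ℝ => φ x.1) (d • ContinuousLinearMap.fst ℝ ℝ ℝ) p :=
  hφ.comp_hasFDerivAt p (hasFDerivAt_fst (𝕜 := ℝ) (p := p))

theorem pdu_comp_fst_mul (hφ : HasDerivAt φ d p.1) (hf : DifferentiableAt ℝ f p) :
    pdu (fun x => φ x.1 * f x) p = d * f p + φ p.1 * pdu f p := by
  simp [pdu, fderiv_fun_mul hφ.hasFDerivAt_comp_fst.differentiableAt hf,
    hφ.hasFDerivAt_comp_fst.fderiv]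
  ring

theorem pdv_comp_fst_mul (hφ : HasDerivAt φ d p.1) (hf : DifferentiableAt ℝ f p) :
    pdv (fun x => φ x.1 * f x) p = φ p.1 * pdv f p := by
  simp [pdv, fderiv_fun_mul hφ.hasFDerivAt_comp_fst.differentiableAt hf,
    hφ.hasFDerivAt_comp_fst.fderiv]

end FirstCoordinateFactor

theorem ContDiffOn.pdu {m n : WithTop ℕ∞} (hf : ContDiffOn ℝ n f S) (hS : IsOpen S)
    (hmn : m + 1 ≤ n) : ContDiffOn ℝ m (pdu f) S :=
  (hf.fderiv_of_isOpen hS hmn).clm_apply contDiffOn_const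

theorem ContDiffOn.pdv {m n : WithTop ℕ∞} (hf : ContDiffOn ℝ n f S) (hS : IsOpen S)
    (hmn : m + 1 ≤ n) : ContDiffOn ℝ m (pdv f) S :=
  (hf.fderiv_of_isOpen hS hmn).clm_apply contDiffOn_const

theorem ContDiffOn.differentiableAt_of_isOpen {n : WithTop ℕ∞} (hf : ContDiffOn ℝ n f S)
    (hS : IsOpen S) (hp : p ∈ S) (hn : n ≠ 0) : DifferentiableAt ℝ f p :=
  (hf.differentiableOn hn).differentiableAt (hS.mem_nhds hp)

theorem pdu_pdv_of_contDiffAt (hf : ContDiffAt ℝ 2 f p) : pdu (pdv f) p = pdv (pdu f) p := by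
  have hd : DifferentiableAt ℝ (fderiv ℝ f) p :=
    (hf.fderiv_right (m := 1) le_rfl).differentiableAt one_ne_zero
  change fderiv ℝ (fun y => fderiv ℝ f y (0, 1)) p (1, 0) =
    fderiv ℝ (fun y => fderiv ℝ f y (1, 0)) p (0, 1)
  rw [fderiv_clm_apply hd (differentiableAt_const _),
    fderiv_clm_apply hd (differentiableAt_const _)]
  simp [hf.isSymmSndFDerivAt (by simp) (0, 1) (1, 0)]

end PartialDerivatives

section CogeodesicSphere

variable {S : Set (ℝ × ℝ)} {E F G : ℝ × ℝ → ℝ} {p : ℝ × ℝ}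

theorem cos_sq_mul_pdv_pdu_add (hS : IsOpen S) (hE : ContDiffOn ℝ ∞ E S)
    (hF : ContDiffOn ℝ ∞ F S) (hG : ContDiffOn ℝ ∞ G S) (hcos : ∀ q ∈ S, cos q.1 ≠ 0)
    (h1 : ∀ q ∈ S, cos q.1 ^ 3 * pdu E q = 4 * sin q.1 * G q + 2 * cos q.1 * pdu G q)
    (h2 : ∀ q ∈ S, 2 * pdu F q = pdv E q)
    (h4 : ∀ q ∈ S, pdv G q = 2 * cos q.1 ^ 2 * pdv E q + 6 * (sin q.1 * cos q.1) * F q)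
    (hp : p ∈ S) :
    cos p.1 ^ 2 * pdv (pdu E) p + 2 * (sin p.1 * cos p.1) * pdv E p = -4 * F p := by
  have hEu := hE.pdu hS (m := ∞) le_rfl
  have hG_diff := hG.differentiableAt_of_isOpen hS hp (by simp)
  have hF_diff := hF.differentiableAt_of_isOpen hS hp (by simp)
  have hEu_diff := hEu.differentiableAt_of_isOpen hS hp (by simp)
  have hEv_diff := (hE.pdv hS (m := ∞) le_rfl).differentiableAt_of_isOpen hS hp (by simp)
  have hGu_diff := (hG.pdu hS (m := ∞) le_rfl).differentiableAt_of_isOpen hS hp (by simp)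
  have h1_v : pdv (fun x => cos x.1 ^ 3 * pdu E x) p =
      pdv (fun x => 4 * sin x.1 * G x + 2 * cos x.1 * pdu G x) p :=
    pdv_congr_of_eqOn hS hp h1
  rw [pdv_comp_fst_mul (φ := (cos · ^ 3)) ((hasDerivAt_cos _).pow 3) hEu_diff,
    pdv_add (by fun_prop) (by fun_prop),
    pdv_comp_fst_mul (φ := (4 * sin ·)) ((hasDerivAt_sin _).const_mul 4) hG_diff,
    pdv_comp_fst_mul (φ := (2 * cos ·)) ((hasDerivAt_cos _).const_mul 2) hGu_diff] at h1_v
  have h4_u : pdu (pdv G) p =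
      pdu (fun x => 2 * cos x.1 ^ 2 * pdv E x + 6 * (sin x.1 * cos x.1) * F x) p :=
    pdu_congr_of_eqOn hS hp h4
  rw [pdu_add (by fun_prop) (by fun_prop),
    pdu_comp_fst_mul (φ := (2 * cos · ^ 2)) (((hasDerivAt_cos _).pow 2).const_mul 2) hEv_diff,
    pdu_comp_fst_mul (φ := fun t => 6 * (sin t * cos t))
      (((hasDerivAt_sin _).mul (hasDerivAt_cos _)).const_mul 6) hF_diff] at h4_u
  have hG_symm := pdu_pdv_of_contDiffAt ((hG.contDiffAt (hS.mem_nhds hp)).of_le (by decide))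
  have hE_symm := pdu_pdv_of_contDiffAt ((hE.contDiffAt (hS.mem_nhds hp)).of_le (by decide))
  apply mul_left_cancel₀ (hcos p hp)
  linear_combination (-1/3 : ℝ) * h1_v + (-2 * cos p.1 / 3) * h4_u + (2 * cos p.1 / 3) * hG_symm +
      (-4 * cos p.1 ^ 3 / 3) * hE_symm + (-4 * sin p.1 / 3) * h4 p hp +
      (-2 * sin p.1 * cos p.1 ^ 2) * h2 p hp + (-4 * cos p.1 * F p) * sin_sq_add_cos_sq p.1

theorem pdv_pdu_pdu_eq (hS : IsOpen S) (hE : ContDiffOn ℝ ∞ E S) (hF : ContDiffOn ℝ ∞ F S)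
    (hcos : ∀ q ∈ S, cos q.1 ≠ 0) (h2 : ∀ q ∈ S, 2 * pdu F q = pdv E q)
    (hEuv : ∀ q ∈ S,
      cos q.1 ^ 2 * pdv (pdu E) q + 2 * (sin q.1 * cos q.1) * pdv E q = -4 * F q)
    (hp : p ∈ S) :
    pdv (pdu (pdu E)) p = -4 * pdv E p := by
  have hEu := hE.pdu hS (m := ∞) le_rfl
  have hF_diff := hF.differentiableAt_of_isOpen hS hp (by simp)
  have hEv_diff := (hE.pdv hS (m := ∞) le_rfl).differentiableAt_of_isOpen hS hp (by simp)
  have hEuv_diff := (hEu.pdv hS (m := ∞) le_rfl).differentiableAt_of_isOpen hS hp (by simp)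
  have hEuv_u : pdu (fun x => cos x.1 ^ 2 * pdv (pdu E) x + 2 * (sin x.1 * cos x.1) * pdv E x) p =
      pdu (fun x => -4 * F x) p :=
    pdu_congr_of_eqOn hS hp hEuv
  rw [pdu_add (by fun_prop) (by fun_prop),
    pdu_comp_fst_mul (φ := (cos · ^ 2)) ((hasDerivAt_cos _).pow 2) hEuv_diff,
    pdu_comp_fst_mul (φ := fun t => 2 * (sin t * cos t))
      (((hasDerivAt_sin _).mul (hasDerivAt_cos _)).const_mul 2) hEv_diff,
    pdu_const_mul hF_diff] at hEuv_u
  have hEu_symm := pdu_pdv_of_contDiffAt ((hEu.contDiffAt (hS.mem_nhds hp)).of_le (by decide))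
  have hE_symm := pdu_pdv_of_contDiffAt ((hE.contDiffAt (hS.mem_nhds hp)).of_le (by decide))
  apply mul_left_cancel₀ (pow_ne_zero 2 (hcos p hp))
  linear_combination hEuv_u - cos p.1 ^ 2 * hEu_symm - 2 * (sin p.1 * cos p.1) * hE_symm -
    2 * h2 p hp + 2 * pdv E p * sin_sq_add_cos_sq p.1

end CogeodesicSphere

theorem infinitesimal_beltrami_sphere_deltaK_general
    (S : Set (ℝ × ℝ)) (hS : S = {p : ℝ × ℝ | |p.1| < π / 2})
    (δE δF δG : ℝ × ℝ → ℝ)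
    (hE : ContDiffOn ℝ (⊤ : ℕ∞) δE S) (hF : ContDiffOn ℝ (⊤ : ℕ∞) δF S)
    (hG : ContDiffOn ℝ (⊤ : ℕ∞) δG S)
    (h1 : ∀ p ∈ S, (1 / 2) * pdu δE p =
      2 * (sin p.1 / cos p.1 ^ 3) * δG p + (1 / cos p.1 ^ 2) * pdu δG p)
    (h2 : ∀ p ∈ S, 2 * pdu δF p = pdv δE p)
    (h4 : ∀ p ∈ S, (1 / (2 * cos p.1 ^ 2)) * pdv δG p =
      pdv δE p + 3 * tan p.1 * δF p)
    (δK : ℝ × ℝ → ℝ)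
    (hK : ∀ p, δK p = -δE p - (1 / 4) * pdu (pdu δE) p) :
    ∀ p ∈ S, pdv δK p = 0 := by
  have hS_open : IsOpen S := hS ▸ isOpen_lt continuous_fst.abs continuous_const
  have hcos : ∀ q ∈ S, cos q.1 ≠ 0 := by
    subst hS
    exact fun q hq => (cos_pos_of_mem_Ioo (abs_lt.1 hq)).ne'
  have h1' : ∀ q ∈ S,
      cos q.1 ^ 3 * pdu δE q = 4 * sin q.1 * δG q + 2 * cos q.1 * pdu δG q := by
    intro q hq
    have := h1 q hq
    field_simp [hcos q hq] at this
    linear_combination this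
  have h4' : ∀ q ∈ S,
      pdv δG q = 2 * cos q.1 ^ 2 * pdv δE q + 6 * (sin q.1 * cos q.1) * δF q := by
    intro q hq
    have := h4 q hq
    rw [tan_eq_sin_div_cos] at this
    field_simp [hcos q hq] at this
    linear_combination this
  have hEuv q hq := cos_sq_mul_pdv_pdu_add hS_open hE hF hG hcos h1' h2 h4' (p := q) hq
  intro p hp
  have hEuu_diff := ((hE.pdu hS_open (m := ∞) le_rfl).pdu hS_open (m := ∞) le_rfl
    ).differentiableAt_of_isOpen hS_open hp (by simp)
  rw [funext hK, pdv_sub (hE.differentiableAt_of_isOpen hS_open hp (by simp)).fun_neg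
    (hEuu_diff.const_mul _), pdv_neg, pdv_const_mul hEuu_diff,
    pdv_pdu_pdu_eq hS_open hE hF hcos h2 hEuv hp]
  ring

/-- For an infinitesimally cogeodesical deformation of the round sphere metric
`du² + cos²u dv²`, the variation `δK = −δE − (1/4) ∂ᵤ∂ᵤδE` of the Gaussian curvature
satisfies `∂ᵥ δK = 0`. -/
theorem infinitesimal_beltrami_sphere_deltaK
    (S : Set (ℝ × ℝ)) (hS : S = {p : ℝ × ℝ | |p.1| < π / 2})
    (δE δF δG : ℝ × ℝ → ℝ)
    (hE : ContDiffOn ℝ (⊤ : ℕ∞) δE S) (hF : ContDiffOn ℝ (⊤ : ℕ∞) δF S)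
    (hG : ContDiffOn ℝ (⊤ : ℕ∞) δG S)
    (h1 : ∀ p ∈ S, (1 / 2) * pdu δE p =
      2 * (sin p.1 / cos p.1 ^ 3) * δG p + (1 / cos p.1 ^ 2) * pdu δG p)
    (h2 : ∀ p ∈ S, 2 * pdu δF p = pdv δE p)
    (h3 : ∀ p ∈ S, pdv δF p - sin p.1 * cos p.1 * δE p - (1 / 2) * pdu δG p = 0)
    (h4 : ∀ p ∈ S, (1 / (2 * cos p.1 ^ 2)) * pdv δG p =
      pdv δE p + 3 * tan p.1 * δF p)
    (δK : ℝ × ℝ → ℝ)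
    (hK : ∀ p, δK p = -δE p - (1 / 4) * pdu (pdu δE) p) :
    ∀ p ∈ S, pdv δK p = 0 :=
  infinitesimal_beltrami_sphere_deltaK_general S hS δE δF δG hE hF hG h1 h2 h4 δK hK
end
end

section
/- Let U ⊆ ℝⁿ be open, φ : U → ℝ smooth, p ∈ U and v ∈ ℝⁿ a unit vector. Let γ : (−ε, ε) → U be a curve solving the conformal geodesic equation for φ with γ(0) = p and γ′(0) = v. Then, as t → 0, γ(t) = p + t·v + (t²/2)·( ∇φ − 2·⟨∇φ, v⟩·v ) + (t³/6)·( Hs_φ(v) − 2·Hess_φ(v, v)·v − 2·‖∇φ‖²·v + 8·⟨∇φ, v⟩²·v − 4·⟨∇φ, v⟩·∇φ ) + o(t³), where ∇φ, Hs_φ and Hess_φ are all evaluated at the point p. -/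
open scoped RealInnerProductSpace
open Asymptotics Filter Topology

noncomputable section

/-- The Hessian of `φ` at `p`, as a bilinear form evaluated at `(v, w)`. -/
def Hess {n : ℕ} (φ : EuclideanSpace ℝ (Fin n) → ℝ)
    (p v w : EuclideanSpace ℝ (Fin n)) : ℝ :=
  fderiv ℝ (fderiv ℝ φ) p v w

/-- The Hessian operator of `φ` at `p`, characterised by
`⟪HessOp φ p v, w⟫ = Hess φ p v w`. -/
def HessOp {n : ℕ} (φ : EuclideanSpace ℝ (Fin n) → ℝ)
    (p v : EuclideanSpace ℝ (Fin n)) : EuclideanSpace ℝ (Fin n) :=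
  fderiv ℝ (fun x => gradient φ x) p v

/-- `γ` solves the conformal geodesic equation for `φ` on the interval `(-ε, ε)`,
with values in `U`:  `γ″ = ‖γ′‖² ∇φ(γ) − 2 ⟨∇φ(γ), γ′⟩ γ′`. -/
def IsConformalGeodesic {n : ℕ} (U : Set (EuclideanSpace ℝ (Fin n)))
    (φ : EuclideanSpace ℝ (Fin n) → ℝ) (ε : ℝ)
    (γ : ℝ → EuclideanSpace ℝ (Fin n)) : Prop :=
  (∀ t ∈ Set.Ioo (-ε) ε, γ t ∈ U) ∧
  ContDiffOn ℝ 2 γ (Set.Ioo (-ε) ε) ∧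
  ∀ t ∈ Set.Ioo (-ε) ε,
    deriv (deriv γ) t =
      (‖deriv γ t‖ ^ 2) • gradient φ (γ t)
        - (2 * ⟪gradient φ (γ t), deriv γ t⟫) • deriv γ t

/-!
Since `γ` is only `C²`, the expansion is a Peano-type Taylor estimate that needs the third
derivative only at `0`: integrating little-o bounds twice with the mean value inequality turns
`HasDerivAt γ'' a 0` into `γ(t) = p + t v + t²/2 γ''(0) + t³/6 a + o(t³)`. The equation gives
`γ''(0)` directly, and differentiating it at `0` (the chain rule through `∇φ ∘ γ` produces
`Hs_φ(v)`) gives `a`; with `⟪v, v⟫ = 1` both collapse to the stated coefficients.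
-/

section Taylor

variable {E : Type*} [NormedAddCommGroup E] [NormedSpace ℝ E]

theorem isLittleO_sub_pow_succ_of_eventually_hasDerivAt {f f' : ℝ → E} {x₀ : ℝ} {n : ℕ}
    (hff' : ∀ᶠ x in 𝓝 x₀, HasDerivAt f (f' x) x) (hf' : f' =o[𝓝 x₀] fun x ↦ (x - x₀) ^ n) :
    (fun x ↦ f x - f x₀) =o[𝓝 x₀] fun x ↦ (x - x₀) ^ (n + 1) := by
  obtain ⟨δ, hδ, hball⟩ := Metric.eventually_nhds_iff_ball.mp hff'
  have hnhds : 𝓝[Metric.ball x₀ δ] x₀ = 𝓝 x₀ :=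
    Metric.isOpen_ball.nhdsWithin_eq (Metric.mem_ball_self hδ)
  simpa only [hnhds] using (convex_ball x₀ δ).isLittleO_pow_succ_real
    (Metric.mem_ball_self hδ) (fun x hx ↦ (hball x hx).hasDerivWithinAt) (hnhds ▸ hf')

theorem hasDerivAt_quadratic (x₀ x : ℝ) (a₀ a₁ a₂ : E) :
    HasDerivAt (fun x ↦ a₀ + (x - x₀) • a₁ + ((x - x₀) ^ 2 / 2) • a₂) (a₁ + (x - x₀) • a₂) x := by
  have hlin := (hasDerivAt_id x).sub_const x₀
  refine (((hlin.smul_const a₁).const_add a₀).add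
    ((hlin.pow 2).div_const 2 |>.smul_const a₂)).congr_deriv ?_
  simp only [id]
  module

theorem ContDiffOn.hasDerivAt_deriv {f : ℝ → E} {s : Set ℝ} {x : ℝ}
    (hf : ContDiffOn ℝ 2 f s) (hs : s ∈ 𝓝 x) : HasDerivAt (deriv f) (deriv (deriv f) x) x := by
  have hf' : ContDiffOn ℝ 1 (deriv f) (interior s) :=
    (hf.mono interior_subset).deriv_of_isOpen isOpen_interior (by norm_num)
  exact ((hf'.differentiableOn one_ne_zero).differentiableAt
    (interior_mem_nhds.mpr hs)).hasDerivAt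

theorem isLittleO_taylor_three_of_hasDerivAt {f : ℝ → E} {s : Set ℝ} {x₀ : ℝ} {a : E}
    (hf : ContDiffOn ℝ 2 f s) (hs : s ∈ 𝓝 x₀) (ha : HasDerivAt (deriv (deriv f)) a x₀) :
    (fun x ↦ f x - (f x₀ + (x - x₀) • deriv f x₀ + ((x - x₀) ^ 2 / 2) • deriv (deriv f) x₀
        + ((x - x₀) ^ 3 / 6) • a)) =o[𝓝 x₀] fun x ↦ (x - x₀) ^ 3 := by
  have hdf : ∀ᶠ x in 𝓝 x₀, HasDerivAt f (deriv f x) x :=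
    eventually_mem_nhds_iff.mpr hs |>.mono fun x hx ↦
      ((hf.contDiffAt hx).differentiableAt two_ne_zero).hasDerivAt
  have hddf : ∀ᶠ x in 𝓝 x₀, HasDerivAt (deriv f) (deriv (deriv f) x) x :=
    eventually_mem_nhds_iff.mpr hs |>.mono fun x hx ↦ hf.hasDerivAt_deriv hx
  have hacc : (fun x ↦ deriv (deriv f) x - (deriv (deriv f) x₀ + (x - x₀) • a))
      =o[𝓝 x₀] fun x ↦ (x - x₀) ^ 1 := by
    simpa only [pow_one, sub_sub] using hasDerivAt_iff_isLittleO.mp ha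
  have hvel : (fun x ↦ deriv f x - (deriv f x₀ + (x - x₀) • deriv (deriv f) x₀
      + ((x - x₀) ^ 2 / 2) • a)) =o[𝓝 x₀] fun x ↦ (x - x₀) ^ 2 := by
    simpa using isLittleO_sub_pow_succ_of_eventually_hasDerivAt
      (hddf.mono fun x hx ↦ hx.sub (hasDerivAt_quadratic x₀ x (deriv f x₀) _ a)) hacc
  have hcubic : ∀ x, HasDerivAt (fun x ↦ f x₀ + (x - x₀) • deriv f x₀
      + ((x - x₀) ^ 2 / 2) • deriv (deriv f) x₀ + ((x - x₀) ^ 3 / 6) • a)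
      (deriv f x₀ + (x - x₀) • deriv (deriv f) x₀ + ((x - x₀) ^ 2 / 2) • a) x := fun x ↦ by
    have hlin := (hasDerivAt_id x).sub_const x₀
    refine ((hasDerivAt_quadratic x₀ x (f x₀) _ _).add
      ((hlin.pow 3).div_const 6 |>.smul_const a)).congr_deriv ?_
    simp only [id]
    module
  simpa using isLittleO_sub_pow_succ_of_eventually_hasDerivAt
    (hdf.mono fun x hx ↦ hx.sub (hcubic x)) hvel

end Taylor

section Conformal

variable {F : Type*} [NormedAddCommGroup F] [InnerProductSpace ℝ F]

/-- The right-hand side of the conformal geodesic equation, with `g = ∇φ(γ t)` and `y = γ' t`;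
`IsConformalGeodesic` unfolds to it definitionally. -/
def conformalAccel (g y : F) : F :=
  ‖y‖ ^ 2 • g - (2 * ⟪g, y⟫) • y

theorem conformalAccel_of_norm_eq_one (g : F) {v : F} (hv : ‖v‖ = 1) :
    conformalAccel g v = g - (2 * ⟪g, v⟫) • v := by
  rw [conformalAccel, hv, one_pow, one_smul]

theorem HasDerivAt.conformalAccel {g y : ℝ → F} {g' y' : F} {t : ℝ}
    (hg : HasDerivAt g g' t) (hy : HasDerivAt y y' t) :
    HasDerivAt (fun s ↦ conformalAccel (g s) (y s))
      (‖y t‖ ^ 2 • g' + (2 * ⟪y t, y'⟫) • g t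
        - ((2 * ⟪g t, y t⟫) • y' + (2 * (⟪g t, y'⟫ + ⟪g', y t⟫)) • y t)) t :=
  (hy.norm_sq.smul hg).sub (((hg.inner ℝ hy).const_mul 2).smul hy)

theorem conformalAccel_deriv_eq_of_norm_eq_one (g h : F) {v : F} (hv : ‖v‖ = 1) :
    ‖v‖ ^ 2 • h + (2 * ⟪v, conformalAccel g v⟫) • g
        - ((2 * ⟪g, v⟫) • conformalAccel g v + (2 * (⟪g, conformalAccel g v⟫ + ⟪h, v⟫)) • v) =
      h - (2 * ⟪h, v⟫) • v - (2 * ‖g‖ ^ 2) • v + (8 * ⟪g, v⟫ ^ 2) • v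
        - (4 * ⟪g, v⟫) • g := by
  have hvv : ⟪v, v⟫ = 1 := by rw [real_inner_self_eq_norm_sq, hv, one_pow]
  rw [conformalAccel_of_norm_eq_one g hv, inner_sub_right, inner_sub_right, real_inner_smul_right,
    real_inner_smul_right, hvv, real_inner_comm v g, real_inner_self_eq_norm_sq, hv]
  module

theorem ContDiffAt.differentiableAt_gradient [CompleteSpace F] {φ : F → ℝ} {p : F}
    (hφ : ContDiffAt ℝ 2 φ p) : DifferentiableAt ℝ (gradient φ) p :=
  (InnerProductSpace.toDual ℝ F).symm.differentiable.differentiableAt.comp p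
    ((hφ.fderiv_right (m := 1) le_rfl).differentiableAt one_ne_zero)

end Conformal

theorem inner_HessOp {n : ℕ} (φ : EuclideanSpace ℝ (Fin n) → ℝ)
    (p v w : EuclideanSpace ℝ (Fin n)) :
    ⟪HessOp φ p v, w⟫ = Hess φ p v w := by
  have hgrad : (fun x ↦ gradient φ x) =
      (InnerProductSpace.toDual ℝ (EuclideanSpace ℝ (Fin n))).symm ∘ fderiv ℝ φ := rfl
  rw [HessOp, hgrad, LinearIsometryEquiv.comp_fderiv]
  exact InnerProductSpace.toDual_symm_apply

/-- Third-order Taylor expansion of a conformal geodesic with unit initial velocity. -/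
theorem conformal_geodesic_taylor {n : ℕ}
    (U : Set (EuclideanSpace ℝ (Fin n))) (hU : IsOpen U)
    (φ : EuclideanSpace ℝ (Fin n) → ℝ) (hφ : ContDiffOn ℝ (⊤ : ℕ∞) φ U)
    (p : EuclideanSpace ℝ (Fin n)) (hp : p ∈ U)
    (v : EuclideanSpace ℝ (Fin n)) (hv : ‖v‖ = 1)
    (ε : ℝ) (hε : 0 < ε) (γ : ℝ → EuclideanSpace ℝ (Fin n))
    (hγ : IsConformalGeodesic U φ ε γ)
    (hγ0 : γ 0 = p) (hγ'0 : deriv γ 0 = v) :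
    (fun t : ℝ => γ t - (p + t • v
        + (t ^ 2 / 2) • (gradient φ p - (2 * ⟪gradient φ p, v⟫) • v)
        + (t ^ 3 / 6) • (HessOp φ p v - (2 * Hess φ p v v) • v
            - (2 * ‖gradient φ p‖ ^ 2) • v + (8 * ⟪gradient φ p, v⟫ ^ 2) • v
            - (4 * ⟪gradient φ p, v⟫) • gradient φ p)))
      =o[𝓝 0] (fun t : ℝ => t ^ 3) := by
  obtain ⟨-, hC2, hode⟩ := hγ
  have hs : Set.Ioo (-ε) ε ∈ 𝓝 (0 : ℝ) := Ioo_mem_nhds (by linarith) hε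
  have hode' : deriv (deriv γ) =ᶠ[𝓝 0] fun t ↦ conformalAccel (gradient φ (γ t)) (deriv γ t) :=
    Filter.mem_of_superset hs hode
  have hacc : deriv (deriv γ) 0 = conformalAccel (gradient φ p) v := by
    rw [hode'.eq_of_nhds, hγ0, hγ'0]
  have hgrad : HasDerivAt (fun t ↦ gradient φ (γ t)) (HessOp φ p v) 0 := by
    have hφp : ContDiffAt ℝ 2 φ p :=
      (hφ.contDiffAt (hU.mem_nhds hp)).of_le (WithTop.coe_le_coe.mpr le_top)
    have hγ1 : HasDerivAt γ v 0 :=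
      hγ'0 ▸ ((hC2.contDiffAt hs).differentiableAt two_ne_zero).hasDerivAt
    exact hφp.differentiableAt_gradient.hasFDerivAt.comp_hasDerivAt_of_eq 0 hγ1 hγ0.symm
  have hγ2 : HasDerivAt (deriv γ) (conformalAccel (gradient φ p) v) 0 :=
    hacc ▸ hC2.hasDerivAt_deriv hs
  have hjerk := hgrad.conformalAccel hγ2
  rw [hγ0, hγ'0, conformalAccel_deriv_eq_of_norm_eq_one _ _ hv, inner_HessOp] at hjerk
  simpa only [sub_zero, hγ0, hγ'0, hacc, conformalAccel_of_norm_eq_one _ hv] using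
    isLittleO_taylor_three_of_hasDerivAt hC2 hs (hjerk.congr_of_eventuallyEq hode')
end
end

section
/- Let n ≥ 1, let U ⊆ ℝⁿ be open, and let φ : U → ℝ be smooth. Suppose there is a function μ : U → ℝ such that Hess φ_p(v, w) = μ(p)·⟨v, w⟩ + ⟨∇φ(p), v⟩·⟨∇φ(p), w⟩ for all p ∈ U and all v, w ∈ ℝⁿ. Then the function h := e^{−φ} satisfies Hess h_p(v, w) = (Δh(p)/n)·⟨v, w⟩ for all p ∈ U and all v, w ∈ ℝⁿ, where Δ denotes the Euclidean Laplacian. -/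
open scoped RealInnerProductSpace

noncomputable section

/-- The Euclidean Laplacian of `φ` at `p`: the trace of the Hessian. -/
def lap {n : ℕ} (φ : EuclideanSpace ℝ (Fin n) → ℝ)
    (p : EuclideanSpace ℝ (Fin n)) : ℝ :=
  ∑ i : Fin n, Hess φ p (EuclideanSpace.single i 1) (EuclideanSpace.single i 1)

/-!
Differentiating `h = e^{-φ}` twice gives `Hess h = h · (dφ ⊗ dφ - Hess φ)`, so the hypothesis turns
`Hess h` into the pointwise multiple `-h μ · g` of the metric. The trace of a multiple `c · g` is
`n c`, which identifies the factor as `Δh / n`.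
-/

section

variable {E : Type*} [NormedAddCommGroup E] [NormedSpace ℝ E] {φ : E → ℝ}

theorem hasFDerivAt_exp_neg {x : E} (hφ : DifferentiableAt ℝ φ x) :
    HasFDerivAt (fun y ↦ Real.exp (-φ y)) (-Real.exp (-φ x) • fderiv ℝ φ x) x := by
  simpa using hφ.hasFDerivAt.neg.exp

theorem fderiv_fderiv_exp_neg_apply {p : E} (hφ : ContDiffAt ℝ 2 φ p) (v w : E) :
    fderiv ℝ (fderiv ℝ fun x ↦ Real.exp (-φ x)) p v w =
      Real.exp (-φ p) * (fderiv ℝ φ p v * fderiv ℝ φ p w - fderiv ℝ (fderiv ℝ φ) p v w) := by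
  have hfderiv : fderiv ℝ (fun x ↦ Real.exp (-φ x)) =ᶠ[nhds p]
      (fun x ↦ -Real.exp (-φ x)) • fderiv ℝ φ := by
    filter_upwards [hφ.eventually (by simp)] with x hx
    exact (hasFDerivAt_exp_neg (hx.differentiableAt two_ne_zero)).fderiv
  have hcoeff : HasFDerivAt (fun x ↦ -Real.exp (-φ x)) (Real.exp (-φ p) • fderiv ℝ φ p) p := by
    simpa using (hasFDerivAt_exp_neg (hφ.differentiableAt two_ne_zero)).fun_neg
  have hD2 : HasFDerivAt (fderiv ℝ φ) (fderiv ℝ (fderiv ℝ φ) p) p :=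
    ((hφ.fderiv_right (m := 1) le_rfl).differentiableAt one_ne_zero).hasFDerivAt
  rw [hfderiv.fderiv_eq, (hcoeff.smul hD2).fderiv]
  simp only [add_apply, smul_apply, ContinuousLinearMap.smulRight_apply, smul_eq_mul]
  ring

end

theorem hess_eq_lap_div_mul_inner {n : ℕ} {f : EuclideanSpace ℝ (Fin n) → ℝ}
    {p : EuclideanSpace ℝ (Fin n)} {c : ℝ} (hf : ∀ v w, Hess f p v w = c * ⟪v, w⟫)
    (v w : EuclideanSpace ℝ (Fin n)) : Hess f p v w = (lap f p / n) * ⟪v, w⟫ := by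
  rcases Nat.eq_zero_or_pos n with rfl | hn
  · simp only [hf, Subsingleton.elim v 0, inner_zero_left, mul_zero]
  have hlap : lap f p = n * c := by
    simp [lap, hf]
  rw [hf, hlap, mul_div_cancel_left₀ _ (by positivity)]

theorem hessian_condition_concircular_general {n : ℕ}
    (U : Set (EuclideanSpace ℝ (Fin n))) (hU : IsOpen U)
    (φ : EuclideanSpace ℝ (Fin n) → ℝ) (hφ : ContDiffOn ℝ (⊤ : ℕ∞) φ U)
    (μ : EuclideanSpace ℝ (Fin n) → ℝ)
    (hμ : ∀ p ∈ U, ∀ v w : EuclideanSpace ℝ (Fin n),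
      Hess φ p v w = μ p * ⟪v, w⟫ + ⟪gradient φ p, v⟫ * ⟪gradient φ p, w⟫)
    (h : EuclideanSpace ℝ (Fin n) → ℝ)
    (hh : ∀ x, h x = Real.exp (-φ x)) :
    ∀ p ∈ U, ∀ v w : EuclideanSpace ℝ (Fin n),
      Hess h p v w = (lap h p / n) * ⟪v, w⟫ := by
  obtain rfl : h = fun x ↦ Real.exp (-φ x) := funext hh
  intro p hp
  have hφp : ContDiffAt ℝ 2 φ p :=
    (hφ.contDiffAt (hU.mem_nhds hp)).of_le (WithTop.coe_le_coe.mpr le_top)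
  refine hess_eq_lap_div_mul_inner (c := -(Real.exp (-φ p) * μ p)) fun v w ↦ ?_
  have hμp := hμ p hp v w
  rw [inner_gradient_left, inner_gradient_left] at hμp
  rw [Hess, fderiv_fderiv_exp_neg_apply hφp, ← Hess, hμp]
  ring

/-- If `Hess φ = μ·g + dφ ⊗ dφ`, then `h = e^{−φ}` satisfies `Hess h = (Δh/n)·g`. -/
theorem hessian_condition_concircular {n : ℕ} (hn : 1 ≤ n)
    (U : Set (EuclideanSpace ℝ (Fin n))) (hU : IsOpen U)
    (φ : EuclideanSpace ℝ (Fin n) → ℝ) (hφ : ContDiffOn ℝ (⊤ : ℕ∞) φ U)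
    (μ : EuclideanSpace ℝ (Fin n) → ℝ)
    (hμ : ∀ p ∈ U, ∀ v w : EuclideanSpace ℝ (Fin n),
      Hess φ p v w = μ p * ⟪v, w⟫ + ⟪gradient φ p, v⟫ * ⟪gradient φ p, w⟫)
    (h : EuclideanSpace ℝ (Fin n) → ℝ)
    (hh : ∀ x, h x = Real.exp (-φ x)) :
    ∀ p ∈ U, ∀ v w : EuclideanSpace ℝ (Fin n),
      Hess h p v w = (lap h p / n) * ⟪v, w⟫ :=
  hessian_condition_concircular_general U hU φ hφ μ hμ h hh
end
end

section
/- Let V be a real vector space and let X : V × V → V be a symmetric ℝ-bilinear map such that for every v ∈ V the vector X(v, v) is a scalar multiple of v. Then there exists an ℝ-linear form ν : V → ℝ such that X(v, w) = ν(v)·w + ν(w)·v for all v, w ∈ V. -/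
/-!
Write `X v v = f v • v`, with `f 0 = 0`; for `v ≠ 0` the factor `f v` is unique, which makes
`f` homogeneous. For independent `v, w` the parallelogram identity
`X (v + w) (v + w) + X (v - w) (v - w) = 2 X v v + 2 X w w`, read off coordinatewise in `v, w`,
gives `f (v + w) = f v + f w`; for dependent ones this is homogeneity. So `f` is a linear
form `μ`, and polarising `X (v + w) (v + w) = μ (v + w) • (v + w)` gives
`2 X v w = μ v • w + μ w • v`.
-/

namespace LinearMap

variable {K V : Type*} [Field K] [AddCommGroup V] [Module K V]
  {X : V →ₗ[K] V →ₗ[K] V} {f : V → K}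

theorem eq_of_apply_self_eq_smul (hf : ∀ v, X v v = f v • v) {v : V} (hv : v ≠ 0) {a : K}
    (ha : X v v = a • v) : f v = a :=
  smul_left_injective K hv ((hf v).symm.trans ha)

theorem apply_smul_of_apply_self_eq_smul (hf : ∀ v, X v v = f v • v) (hf0 : f 0 = 0)
    (t : K) (v : V) : f (t • v) = t * f v := by
  rcases eq_or_ne (t • v) 0 with htv | htv
  · rcases smul_eq_zero.mp htv with rfl | rfl <;> simp [hf0]
  refine eq_of_apply_self_eq_smul hf htv ?_
  simp only [map_smul, smul_apply, hf v]
  module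

theorem apply_add_of_linearIndependent [NeZero (2 : K)] (hf : ∀ v, X v v = f v • v)
    {v w : V} (hvw : LinearIndependent K ![v, w]) : f (v + w) = f v + f w := by
  have parallelogram :
      X (v + w) (v + w) + X (v - w) (v - w) = (2 : K) • X v v + (2 : K) • X w w := by
    simp only [map_add, map_sub, add_apply, sub_apply]
    module
  rw [hf, hf, hf v, hf w] at parallelogram
  obtain ⟨hv, hw⟩ := LinearIndependent.pair_iff.mp hvw
    (f (v + w) + f (v - w) - 2 * f v) (f (v + w) - f (v - w) - 2 * f w)
    (by linear_combination (norm := module) parallelogram)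
  apply mul_left_cancel₀ (two_ne_zero : (2 : K) ≠ 0)
  linear_combination hv + hw

theorem apply_add_of_apply_self_eq_smul [NeZero (2 : K)] (hf : ∀ v, X v v = f v • v)
    (hf0 : f 0 = 0) (v w : V) : f (v + w) = f v + f w := by
  rcases eq_or_ne v 0 with rfl | hv
  · simp [hf0]
  by_cases hvw : LinearIndependent K ![v, w]
  · exact apply_add_of_linearIndependent hf hvw
  obtain ⟨t, rfl⟩ : ∃ t : K, t • v = w := by
    simpa [LinearIndependent.pair_iff' hv] using hvw
  have hsmul := apply_smul_of_apply_self_eq_smul hf hf0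
  have : v + t • v = (1 + t) • v := by module
  rw [this, hsmul, hsmul]
  ring

theorem exists_linearMap_apply_self_eq_smul [NeZero (2 : K)]
    (hprop : ∀ v, ∃ c : K, X v v = c • v) :
    ∃ μ : V →ₗ[K] K, ∀ v, X v v = μ v • v := by
  have hprop₀ : ∀ v, ∃ c : K, X v v = c • v ∧ (v = 0 → c = 0) := fun v ↦ by
    rcases eq_or_ne v 0 with rfl | hv
    · exact ⟨0, by simp, fun _ ↦ rfl⟩
    · obtain ⟨c, hc⟩ := hprop v
      exact ⟨c, hc, fun h ↦ absurd h hv⟩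
  choose f hf hf0 using hprop₀
  exact ⟨{ toFun := f
           map_add' := apply_add_of_apply_self_eq_smul hf (hf0 0 rfl)
           map_smul' := apply_smul_of_apply_self_eq_smul hf (hf0 0 rfl) }, hf⟩

theorem two_smul_apply_of_apply_self_eq_smul (hsymm : ∀ v w, X v w = X w v) {μ : V →ₗ[K] K}
    (hμ : ∀ v, X v v = μ v • v) (v w : V) : (2 : K) • X v w = μ v • w + μ w • v := by
  have expand := hμ (v + w)
  simp only [map_add, add_apply, hμ v, hμ w, hsymm w v] at expand
  linear_combination (norm := module) expand

end LinearMap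

/-- If a symmetric bilinear map `X : V × V → V` satisfies `X(v, v) ∝ v` for all `v`,
then `X(v, w) = ν(v)·w + ν(w)·v` for some linear form `ν`. -/
theorem symm_bilinear_proportional {V : Type*} [AddCommGroup V] [Module ℝ V]
    (X : V →ₗ[ℝ] V →ₗ[ℝ] V)
    (hsymm : ∀ v w : V, X v w = X w v)
    (hprop : ∀ v : V, ∃ c : ℝ, X v v = c • v) :
    ∃ ν : V →ₗ[ℝ] ℝ, ∀ v w : V, X v w = ν v • w + ν w • v := by
  obtain ⟨μ, hμ⟩ := LinearMap.exists_linearMap_apply_self_eq_smul hprop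
  refine ⟨(2⁻¹ : ℝ) • μ, fun v w ↦ ?_⟩
  have h := LinearMap.two_smul_apply_of_apply_self_eq_smul hsymm hμ v w
  simp only [LinearMap.smul_apply, smul_eq_mul, mul_smul, ← smul_add, ← h]
  module
end
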